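/- arXiv:1805.08927 — 7 statements merged into one kernel-verified Lean document; each statement's English description precedes it below -/
import Mathlib

section
/- For an assignment a to a sheaf S of pseudometric spaces on a topological space (X,T), the consistency diameter d_S(a) := sup over U ⊆ V1, U ⊆ V2 in T of d_U(S(U⊆V1)a(V1), S(U⊆V2)a(V2)) satisfies c_S(a) ≤ d_S(a) ≤ 2·c_S(a), where c_S(a) is the consistency radius. -/
open TopologicalSpace ENNReal

universe u v

/-- A sheaf of pseudometric spaces on a topological space, presented by its
stalks `F U` (pseudometric spaces) and continuous restriction maps. -/
structure ResSystem (X : Type u) [TopologicalSpace X] (F : Opens X → Type v)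
    [∀ U, PseudoMetricSpace (F U)] where
  res : ∀ {U V : Opens X}, U ≤ V → F V → F U
  res_id : ∀ (U : Opens X) (x : F U), res le_rfl x = x
  res_comp : ∀ {U V W : Opens X} (hUV : U ≤ V) (hVW : V ≤ W) (x : F W),
    res (hUV.trans hVW) x = res hUV (res hVW x)
  res_cont : ∀ {U V : Opens X} (h : U ≤ V), Continuous (res h)

variable {X : Type u} [TopologicalSpace X] {F : Opens X → Type v} [∀ U, PseudoMetricSpace (F U)]

/-- Consistency radius of an assignment. -/
noncomputable def ResSystem.crad (S : ResSystem X F) (a : ∀ U, F U) : ℝ≥0∞ :=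
  ⨆ (U : Opens X) (V : Opens X) (h : U ≤ V), edist (S.res h (a V)) (a U)

/-- Local consistency radius of an assignment on an open set `W`. -/
noncomputable def ResSystem.lcrad (S : ResSystem X F) (a : ∀ U, F U) (W : Opens X) : ℝ≥0∞ :=
  ⨆ (U : Opens X) (V : Opens X) (_ : V ≤ W) (h : U ≤ V), edist (S.res h (a V)) (a U)

/-- An assignment is a global section when it is compatible with all restrictions. -/
def ResSystem.IsGlobalSection (S : ResSystem X F) (s : ∀ U, F U) : Prop :=
  ∀ {U V : Opens X} (h : U ≤ V), S.res h (s V) = s U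

/-- Consistency diameter. -/
noncomputable def ResSystem.cdiam (S : ResSystem X F) (a : ∀ U, F U) : ℝ≥0∞ :=
  ⨆ (U : Opens X) (V₁ : Opens X) (V₂ : Opens X) (h₁ : U ≤ V₁) (h₂ : U ≤ V₂),
    edist (S.res h₁ (a V₁)) (S.res h₂ (a V₂))

/-- The consistency diameter satisfies `c_S(a) ≤ d_S(a) ≤ 2 c_S(a)`. -/
theorem crad_le_cdiam_le_two_crad (S : ResSystem X F) (a : ∀ U, F U) :
    S.crad a ≤ S.cdiam a ∧ S.cdiam a ≤ 2 * S.crad a := by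
  constructor
  · refine iSup_le fun U => iSup_le fun V => iSup_le fun h => ?_
    have : edist (S.res h (a V)) (a U)
        = edist (S.res h (a V)) (S.res (le_refl U) (a U)) := by
      rw [S.res_id]
    rw [this]
    exact le_iSup_of_le U (le_iSup_of_le V (le_iSup_of_le U
      (le_iSup_of_le h (le_iSup_of_le le_rfl le_rfl))))
  · refine iSup_le fun U => iSup_le fun V₁ => iSup_le fun V₂ =>
      iSup_le fun h₁ => iSup_le fun h₂ => ?_
    calc edist (S.res h₁ (a V₁)) (S.res h₂ (a V₂))
        ≤ edist (S.res h₁ (a V₁)) (a U) + edist (a U) (S.res h₂ (a V₂)) :=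
          edist_triangle _ _ _
      _ ≤ S.crad a + S.crad a := by
          gcongr
          · exact le_iSup_of_le U (le_iSup_of_le V₁ (le_iSup_of_le h₁ le_rfl))
          · rw [edist_comm]
            exact le_iSup_of_le U (le_iSup_of_le V₂ (le_iSup_of_le h₂ le_rfl))
      _ = 2 * S.crad a := (two_mul _).symm
end

section
/- If every restriction map of a sheaf S of pseudometric spaces is Lipschitz with constant K, then for every assignment a and every global section s of S, the assignment pseudometric distance satisfies D(a,s) ≥ c_S(a)/(1+K). -/
open TopologicalSpace ENNReal

universe u v

variable {X : Type u} [TopologicalSpace X] {F : Opens X → Type v} [∀ U, PseudoMetricSpace (F U)]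

/-- If every restriction map is `K`-Lipschitz, then every global section `s` is at
assignment-pseudometric distance at least `c_S(a)/(1+K)` from any assignment `a`. -/
theorem dist_global_section_ge (S : ResSystem X F) (K : ℝ≥0∞)
    (hLip : ∀ {U V : Opens X} (h : U ≤ V) (x y : F V),
      edist (S.res h x) (S.res h y) ≤ K * edist x y)
    (a s : ∀ U, F U) (hs : S.IsGlobalSection s) :
    S.crad a / (1 + K) ≤ ⨆ U : Opens X, edist (a U) (s U) := by
  set D := ⨆ U : Opens X, edist (a U) (s U) with hD
  apply ENNReal.div_le_of_le_mul
  rw [mul_comm]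
  refine iSup_le fun U => iSup_le fun V => iSup_le fun h => ?_
  calc edist (S.res h (a V)) (a U)
      ≤ edist (S.res h (a V)) (S.res h (s V)) + edist (S.res h (s V)) (a U) :=
        edist_triangle _ _ _
    _ ≤ K * edist (a V) (s V) + edist (s U) (a U) := by
        exact add_le_add (hLip h _ _) (by rw [hs h])
    _ ≤ K * D + D := by
        refine add_le_add (mul_le_mul_right (le_iSup (fun U => edist (a U) (s U)) V) K) ?_
        rw [edist_comm]; exact le_iSup (fun U => edist (a U) (s U)) U
    _ = (1 + K) * D := by ring
end

section
/- For assignments a, b to sheaves S, R respectively on the same finite topological space (X,T) with the same stalks (S(U) = R(U) with the same pseudometric d_U for all U), the difference of consistency radii satisfies |c_R(b) − c_S(a)| ≤ sup_{U∈T} d_U(a(U),b(U)) + sup_{U⊆V∈T} d_U(S(U⊆V)b(V), S(U⊆V)a(V)) + sup_{U⊆V∈T} d_U(R(U⊆V)b(V), S(U⊆V)b(V)). -/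
open TopologicalSpace ENNReal

universe u v

variable {X : Type u} [TopologicalSpace X] {F : Opens X → Type v} [∀ U, PseudoMetricSpace (F U)]

/-- For two sheaves `S`, `R` with the same stalks on a finite topological space and
assignments `a`, `b`, the consistency radii differ by at most
`sup d(a,b) + sup d(S(U⊆V)b(V), S(U⊆V)a(V)) + sup d(R(U⊆V)b(V), S(U⊆V)b(V))`. -/
theorem abs_crad_sub_crad_le [Finite (Opens X)] (S R : ResSystem X F) (a b : ∀ U, F U) :
    R.crad b ≤ S.crad a +
      ((⨆ U : Opens X, edist (a U) (b U)) +
       (⨆ (U : Opens X) (V : Opens X) (h : U ≤ V), edist (S.res h (b V)) (S.res h (a V))) +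
       (⨆ (U : Opens X) (V : Opens X) (h : U ≤ V), edist (R.res h (b V)) (S.res h (b V)))) ∧
    S.crad a ≤ R.crad b +
      ((⨆ U : Opens X, edist (a U) (b U)) +
       (⨆ (U : Opens X) (V : Opens X) (h : U ≤ V), edist (S.res h (b V)) (S.res h (a V))) +
       (⨆ (U : Opens X) (V : Opens X) (h : U ≤ V), edist (R.res h (b V)) (S.res h (b V)))) := by
  constructor
  · refine iSup_le fun U => iSup_le fun V => iSup_le fun h => ?_
    calc edist (R.res h (b V)) (b U)
        ≤ edist (R.res h (b V)) (S.res h (b V)) + edist (S.res h (b V)) (a U)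
            + edist (a U) (b U) := edist_triangle4 _ _ _ _
      _ ≤ edist (R.res h (b V)) (S.res h (b V))
            + (edist (S.res h (b V)) (S.res h (a V)) + edist (S.res h (a V)) (a U))
            + edist (a U) (b U) := by
          gcongr; exact edist_triangle _ _ _
      _ = edist (S.res h (a V)) (a U) + (edist (a U) (b U)
            + edist (S.res h (b V)) (S.res h (a V))
            + edist (R.res h (b V)) (S.res h (b V))) := by ring
      _ ≤ S.crad a + ((⨆ U : Opens X, edist (a U) (b U)) +
            (⨆ (U : Opens X) (V : Opens X) (h : U ≤ V), edist (S.res h (b V)) (S.res h (a V))) +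
            (⨆ (U : Opens X) (V : Opens X) (h : U ≤ V), edist (R.res h (b V)) (S.res h (b V)))) := by
          simp only [ResSystem.crad]
          gcongr
          · exact le_iSup_of_le U (le_iSup_of_le V (le_iSup_of_le h le_rfl))
          · exact le_iSup (fun U => edist (a U) (b U)) U
          · exact le_iSup_of_le U (le_iSup_of_le V (le_iSup_of_le h le_rfl))
          · exact le_iSup_of_le U (le_iSup_of_le V (le_iSup_of_le h le_rfl))
  · refine iSup_le fun U => iSup_le fun V => iSup_le fun h => ?_
    calc edist (S.res h (a V)) (a U)
        ≤ edist (S.res h (a V)) (S.res h (b V)) + edist (S.res h (b V)) (b U)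
            + edist (b U) (a U) := edist_triangle4 _ _ _ _
      _ ≤ edist (S.res h (a V)) (S.res h (b V))
            + (edist (S.res h (b V)) (R.res h (b V)) + edist (R.res h (b V)) (b U))
            + edist (b U) (a U) := by
          gcongr; exact edist_triangle _ _ _
      _ = edist (R.res h (b V)) (b U) + (edist (a U) (b U)
            + edist (S.res h (b V)) (S.res h (a V))
            + edist (R.res h (b V)) (S.res h (b V))) := by
          rw [edist_comm (b U) (a U), edist_comm (S.res h (a V)) (S.res h (b V)), edist_comm (S.res h (b V)) (R.res h (b V))]; ring
      _ ≤ R.crad b + ((⨆ U : Opens X, edist (a U) (b U)) +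
            (⨆ (U : Opens X) (V : Opens X) (h : U ≤ V), edist (S.res h (b V)) (S.res h (a V))) +
            (⨆ (U : Opens X) (V : Opens X) (h : U ≤ V), edist (R.res h (b V)) (S.res h (b V)))) := by
          simp only [ResSystem.crad]
          gcongr
          · exact le_iSup_of_le U (le_iSup_of_le V (le_iSup_of_le h le_rfl))
          · exact le_iSup (fun U => edist (a U) (b U)) U
          · exact le_iSup_of_le U (le_iSup_of_le V (le_iSup_of_le h le_rfl))
          · exact le_iSup_of_le U (le_iSup_of_le V (le_iSup_of_le h le_rfl))
end

section
/- Consistency radius is continuous in the assignment: for a fixed sheaf S of pseudometric spaces on a finite topological space, the map a ↦ c_S(a) from the space of assignments with the assignment pseudometric D to ℝ is continuous; in fact |c_S(a) − c_S(b)| ≤ D(a,b) + sup_{U⊆V} d_U(S(U⊆V)a(V), S(U⊆V)b(V)), and if all restrictions are Lipschitz with constant K then |c_S(a) − c_S(b)| ≤ (1+K)·D(a,b). -/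
open TopologicalSpace ENNReal

universe u v

variable {X : Type u} [TopologicalSpace X] {F : Opens X → Type v} [∀ U, PseudoMetricSpace (F U)]

/-- Consistency radius is continuous in the assignment (for a finite topological space);
moreover `|c_S(a) − c_S(b)| ≤ D(a,b) + sup d(S(U⊆V)a(V), S(U⊆V)b(V))`, and if all
restrictions are `K`-Lipschitz then `|c_S(a) − c_S(b)| ≤ (1+K)·D(a,b)`. -/
theorem crad_continuous_in_assignment [Finite (Opens X)] (S : ResSystem X F) :
    Continuous (fun a : ∀ U, F U => S.crad a) ∧
    (∀ a b : ∀ U, F U,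
      S.crad a ≤ S.crad b + ((⨆ U : Opens X, edist (a U) (b U)) +
        ⨆ (U : Opens X) (V : Opens X) (h : U ≤ V),
          edist (S.res h (a V)) (S.res h (b V)))) ∧
    (∀ K : ℝ≥0∞,
      (∀ {U V : Opens X} (h : U ≤ V) (x y : F V),
        edist (S.res h x) (S.res h y) ≤ K * edist x y) →
      ∀ a b : ∀ U, F U,
        S.crad a ≤ S.crad b + (1 + K) * ⨆ U : Opens X, edist (a U) (b U)) := by
  -- key inequality for parts 2 and 3
  have key : ∀ a b : ∀ U, F U,
      S.crad a ≤ S.crad b + ((⨆ U : Opens X, edist (a U) (b U)) +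
        ⨆ (U : Opens X) (V : Opens X) (h : U ≤ V),
          edist (S.res h (a V)) (S.res h (b V))) := by
    intro a b
    rw [ResSystem.crad]
    refine iSup_le fun U => iSup_le fun V => iSup_le fun h => ?_
    calc edist (S.res h (a V)) (a U)
        ≤ edist (S.res h (a V)) (S.res h (b V)) + edist (S.res h (b V)) (b U)
            + edist (b U) (a U) := edist_triangle4 _ _ _ _
      _ ≤ (⨆ (U : Opens X) (V : Opens X) (h : U ≤ V),
            edist (S.res h (a V)) (S.res h (b V))) + S.crad b
            + ⨆ U : Opens X, edist (a U) (b U) := by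
          gcongr
          · exact le_iSup₂_of_le U V (le_iSup_of_le h le_rfl)
          · exact le_iSup₂_of_le U V (le_iSup_of_le h le_rfl)
          · rw [edist_comm]; exact le_iSup (fun U => edist (a U) (b U)) U
      _ = S.crad b + ((⨆ U : Opens X, edist (a U) (b U)) +
            ⨆ (U : Opens X) (V : Opens X) (h : U ≤ V),
              edist (S.res h (a V)) (S.res h (b V))) := by ring
  refine ⟨?_, key, ?_⟩
  · -- continuity: crad is a finite sup of continuous functions
    haveI : Fintype (Opens X) := Fintype.ofFinite _
    classical
    set f : Opens X × Opens X → (∀ U, F U) → ℝ≥0∞ := fun p a =>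
      if h : p.1 ≤ p.2 then edist (S.res h (a p.2)) (a p.1) else 0 with hf
    have hiSup : ∀ a : ∀ U, F U, S.crad a = ⨆ p : Opens X × Opens X, f p a := by
      intro a
      rw [ResSystem.crad]
      refine le_antisymm (iSup₂_le fun U V => iSup_le fun h => ?_)
        (iSup_le fun p => ?_)
      · exact le_iSup_of_le (α := ℝ≥0∞) (f := fun p => f p a) (U, V)
          (le_of_eq (by simp [hf, h]))
      · by_cases h : p.1 ≤ p.2
        · simp only [hf, h, dif_pos]
          exact le_iSup₂_of_le p.1 p.2 (le_iSup_of_le h le_rfl)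
        · simp [hf, h]
    have hrw : (fun a : ∀ U, F U => S.crad a)
        = fun a => (Finset.univ : Finset (Opens X × Opens X)).sup (f · a) := by
      funext a
      rw [hiSup, Finset.sup_eq_iSup]
      simp only [Finset.mem_univ, iSup_pos]
    rw [hrw]
    refine Continuous.finset_sup_apply fun p _ => ?_
    by_cases h : p.1 ≤ p.2
    · simp only [hf, h, dif_pos]
      exact Continuous.edist ((S.res_cont h).comp (continuous_apply p.2))
        (continuous_apply p.1)
    · simp only [hf, h, dif_neg, not_false_iff]
      exact continuous_const
  · intro K hK a b
    refine (key a b).trans ?_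
    gcongr
    rw [one_add_mul]
    gcongr
    refine iSup₂_le fun U V => iSup_le fun h => ?_
    exact (hK h _ _).trans (by gcongr; exact le_iSup (fun U => edist (a U) (b U)) V)
end

section
/- If m: (S,a) → (R,b) is a morphism of sheaf-assignment pairs along a continuous map f: X → Y, with all component maps m_V Lipschitz continuous with constant K, then for every open U ⊆ Y, c_R(b,U) ≤ K·c_S(a, f⁻¹(U)). -/
open TopologicalSpace ENNReal

universe u v

variable {X : Type u} [TopologicalSpace X] {F : Opens X → Type v} [∀ U, PseudoMetricSpace (F U)]

variable {Y : Type u} [TopologicalSpace Y] {G : Opens Y → Type v} [∀ U, PseudoMetricSpace (G U)]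

/-- A sheaf morphism `S → R` along a continuous map `f : X → Y`. -/
structure ResMorphism (S : ResSystem X F) (R : ResSystem Y G) (f : C(X, Y)) where
  comp : ∀ U : Opens Y, F (Opens.comap f U) → G U
  commutes : ∀ {U V : Opens Y} (h : U ≤ V) (x : F (Opens.comap f V)),
    comp U (S.res (Opens.comap_mono f h) x) = R.res h (comp V x)

/-- If `m : (S,a) → (R,b)` is a morphism of sheaf-assignment pairs along `f`, with all
component maps `K`-Lipschitz, then `c_R(b,U) ≤ K·c_S(a, f⁻¹(U))` for every open `U ⊆ Y`. -/
theorem lcrad_image_le (S : ResSystem X F) (R : ResSystem Y G) (f : C(X, Y))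
    (m : ResMorphism S R f) (a : ∀ U, F U) (b : ∀ U, G U)
    (hab : ∀ U : Opens Y, m.comp U (a (Opens.comap f U)) = b U)
    (K : ℝ≥0∞)
    (hLip : ∀ (U : Opens Y) (x y : F (Opens.comap f U)),
      edist (m.comp U x) (m.comp U y) ≤ K * edist x y)
    (U : Opens Y) :
    R.lcrad b U ≤ K * S.lcrad a (Opens.comap f U) := by
  rw [ResSystem.lcrad]
  refine iSup_le fun W => iSup_le fun V => iSup_le fun hVU => iSup_le fun hWV => ?_
  have key : R.res hWV (b V) = m.comp W (S.res (Opens.comap_mono f hWV) (a (Opens.comap f V))) := by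
    rw [m.commutes hWV, hab]
  rw [key, ← hab W]
  refine le_trans (hLip W _ _) (mul_le_mul_right ?_ K)
  refine le_trans ?_ (le_iSup _ (Opens.comap f W))
  refine le_trans ?_ (le_iSup _ (Opens.comap f V))
  refine le_trans ?_ (le_iSup _ (Opens.comap_mono f hVU))
  exact le_iSup (fun h : Opens.comap f W ≤ Opens.comap f V =>
    edist (S.res h (a (Opens.comap f V))) (a (Opens.comap f W))) (Opens.comap_mono f hWV)
end

section
/- If two assignments a, b to sheaves S, R with the same stalks on the same finite topological space satisfy |c_S(a,U) − c_R(b,U)| < ε for every open U, then the coarsening filtrations t ↦ M_{S,a}(t) and t ↦ M_{R,b}(t) are ε-interleaved; concretely, for every t, M_{S,a}(t−ε) refines M_{R,b}(t) and M_{R,b}(t−ε) refines M_{S,a}(t). -/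
open TopologicalSpace ENNReal

universe u v

variable {X : Type u} [TopologicalSpace X] {F : Opens X → Type v} [∀ U, PseudoMetricSpace (F U)]

/-- A collection of open sets refines another if every member of the first is
contained in some member of the second. -/
def Refines (A B : Set (Opens X)) : Prop := ∀ U ∈ A, ∃ V ∈ B, U ≤ V

/-- The maximal `ε`-consistent collection: the open sets with local consistency radius
less than `ε` that are maximal under inclusion among such. -/
def maxColl (S : ResSystem X F) (a : ∀ U, F U) (ε : ℝ≥0∞) : Set (Opens X) :=
  {U | S.lcrad a U < ε ∧ ∀ V : Opens X, S.lcrad a V < ε → U ≤ V → U = V}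

theorem refines_maxColl [Finite (Opens X)] (R : ResSystem X F) (b : ∀ U, F U) {t : ℝ≥0∞}
    {A : Set (Opens X)} (hA : ∀ U ∈ A, R.lcrad b U < t) : Refines A (maxColl R b t) := by
  intro U hU
  obtain ⟨V, hUV, hV_consistent, hV_max⟩ :=
    (Set.toFinite {V : Opens X | R.lcrad b V < t}).exists_le_maximal (hA U hU)
  exact ⟨V, ⟨hV_consistent, fun W hW hVW => le_antisymm hVW (hV_max hW hVW)⟩, hUV⟩

theorem refines_maxColl_tsub [Finite (Opens X)] (S R : ResSystem X F) (a b : ∀ U, F U)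
    {ε : ℝ≥0∞} (h : ∀ U : Opens X, R.lcrad b U < S.lcrad a U + ε) (t : ℝ≥0∞) :
    Refines (maxColl S a (t - ε)) (maxColl R b t) :=
  refines_maxColl R b fun U hU => (h U).trans (lt_tsub_iff_right.mp hU.1)

/-- If the local consistency radii of `(S,a)` and `(R,b)` differ by less than `ε` on every
open set, then their consistency filtrations are `ε`-interleaved: for every `t`,
`M_{S,a}(t−ε)` refines `M_{R,b}(t)` and `M_{R,b}(t−ε)` refines `M_{S,a}(t)`. -/
theorem consistency_filtration_interleaved [Finite (Opens X)]
    (S R : ResSystem X F) (a b : ∀ U, F U) (ε : ℝ≥0∞)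
    (hclose : ∀ U : Opens X,
      S.lcrad a U < R.lcrad b U + ε ∧ R.lcrad b U < S.lcrad a U + ε) :
    ∀ t : ℝ≥0∞,
      Refines (maxColl S a (t - ε)) (maxColl R b t) ∧
      Refines (maxColl R b (t - ε)) (maxColl S a t) := fun t =>
  ⟨refines_maxColl_tsub S R a b (fun U => (hclose U).2) t,
    refines_maxColl_tsub R S b a (fun U => (hclose U).1) t⟩
end

section
/- Star consistency radius is a lower bound for consistency radius: if a is an assignment supported on the stars of a sheaf S of pseudometric spaces on an Alexandrov space X, then for every open U ⊆ X, c*_S(a,U) ≤ c_S(a,U), where c*_S(a,U) is the maximum of (i) sup over y ∈ U and x ∈ star y of d_{star x}(S(star x ⊆ star y) a(star y), a(star x)) and (ii) sup over x,y ∈ U and z ∈ star x ∩ star y of (1/2)·d_{star z}(S(star z ⊆ star y) a(star y), S(star z ⊆ star x) a(star x)). -/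
open TopologicalSpace ENNReal

universe u v

variable {X : Type u} [TopologicalSpace X] {F : Opens X → Type v} [∀ U, PseudoMetricSpace (F U)]

variable [AlexandrovDiscrete X]

/-- The star of a point: the smallest open set containing it. -/
def ptStar (x : X) : Opens X := ⟨nhdsKer {x}, isOpen_nhdsKer⟩

theorem mem_ptStar (x : X) : x ∈ ptStar x := subset_nhdsKer rfl

theorem ptStar_le {x y : X} (h : x ∈ ptStar y) : ptStar x ≤ ptStar y :=
  (ptStar y).2.nhdsKer_subset.mpr (Set.singleton_subset_iff.mpr h)

theorem ptStar_le_of_mem {x : X} {U : Opens X} (h : x ∈ U) : ptStar x ≤ U :=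
  U.2.nhdsKer_subset.mpr (Set.singleton_subset_iff.mpr h)

namespace ResSystem

variable (S : ResSystem X F) (a : ∀ U, F U)

omit [AlexandrovDiscrete X] in
theorem edist_res_le_lcrad {U V W : Opens X} (hWU : W ≤ U) (hVW : V ≤ W) :
    edist (S.res hVW (a W)) (a V) ≤ S.lcrad a U :=
  le_iSup_of_le V <| le_iSup_of_le W <| le_iSup_of_le hWU <|
    le_iSup (fun h => edist (S.res h (a W)) (a V)) hVW

omit [AlexandrovDiscrete X] in
theorem edist_res_res_div_two_le_lcrad {U V W₁ W₂ : Opens X} (hW₁U : W₁ ≤ U) (hW₂U : W₂ ≤ U)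
    (hVW₁ : V ≤ W₁) (hVW₂ : V ≤ W₂) :
    edist (S.res hVW₁ (a W₁)) (S.res hVW₂ (a W₂)) / 2 ≤ S.lcrad a U := by
  rw [ENNReal.div_le_iff two_ne_zero ENNReal.ofNat_ne_top, mul_two]
  calc edist (S.res hVW₁ (a W₁)) (S.res hVW₂ (a W₂))
      ≤ edist (S.res hVW₁ (a W₁)) (a V) + edist (S.res hVW₂ (a W₂)) (a V) :=
        edist_triangle_right _ _ _
    _ ≤ S.lcrad a U + S.lcrad a U :=
        add_le_add (S.edist_res_le_lcrad a hW₁U hVW₁) (S.edist_res_le_lcrad a hW₂U hVW₂)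

end ResSystem

/-- The star consistency radius is a lower bound for the local consistency radius:
`c*_S(a,U) ≤ c_S(a,U)`, where `c*_S(a,U)` is the max of the radius-type term over stars
and half the diameter-type term over pairs of stars. -/
theorem star_crad_le_lcrad (S : ResSystem X F) (a : ∀ U, F U) (U : Opens X) :
    max
      (⨆ (y : X) (_ : y ∈ U) (x : X) (hx : x ∈ ptStar y),
        edist (S.res (ptStar_le hx) (a (ptStar y))) (a (ptStar x)))
      (⨆ (y : X) (_ : y ∈ U) (x : X) (_ : x ∈ U) (z : X)
          (hzx : z ∈ ptStar x) (hzy : z ∈ ptStar y),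
        edist (S.res (ptStar_le hzy) (a (ptStar y)))
              (S.res (ptStar_le hzx) (a (ptStar x))) / 2)
    ≤ S.lcrad a U := by
  apply max_le
  · exact iSup₂_le fun y hy => iSup₂_le fun x hx =>
      S.edist_res_le_lcrad a (ptStar_le_of_mem hy) (ptStar_le hx)
  · exact iSup₂_le fun y hy => iSup₂_le fun x hx => iSup_le fun z => iSup₂_le fun hzx hzy =>
      S.edist_res_res_div_two_le_lcrad a (ptStar_le_of_mem hy) (ptStar_le_of_mem hx)
        (ptStar_le hzy) (ptStar_le hzx)
end
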